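/- There do not exist points ξ¹,…,ξ⁸ ∈ [-1,1] and nonzero real weights λ₁,…,λ₈ such that ∫ f² dμ = Σⱼ₌₁⁸ λⱼ f(ξʲ)² for every f in span{h₀, h₁, …, h₇}; that is, m(X₈, w) ≥ 9. -/

import Mathlib

/-!
Suppose the nodes `ξ i` and nonzero weights `w i` discretize `∫ f²` on `X₈`. For `j = 4, …, 7`
the function `hⱼ` has mean zero, vanishes outside a short interval `Iⱼ`, and `h₁ = ±1` on `Iⱼ`;
polarizing the identity on `h₁` and `hⱼ` gives `∑ wᵢ hⱼ(ξᵢ) = ±∫ hⱼ = 0`, while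
`∑ wᵢ hⱼ(ξᵢ)² = ∫ hⱼ² ≠ 0`, so at least two nodes lie in `Iⱼ`. The four intervals are disjoint, so
each of the eight nodes lies in one of them, where `h₀ = 1` and `h₁² = 1`. Testing the identity on
`h₀` and `h₁` then gives both `∑ wᵢ = ∫ h₀² = 1` and `∑ wᵢ = ∫ h₁² = 3/4`.
-/

open MeasureTheory Set

noncomputable def g (a b : ℝ) : ℝ → ℝ := fun x =>
  let l := (b - a) / 8
  if a ≤ x ∧ x < a + l then (x - a) / l
  else if a + l ≤ x ∧ x < a + 3 * l then 1
  else if a + 3 * l ≤ x ∧ x < a + 5 * l then (-x + a + 4 * l) / l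
  else if a + 5 * l ≤ x ∧ x < a + 7 * l then -1
  else if a + 7 * l ≤ x ∧ x ≤ b then (x - b) / l
  else 0

noncomputable def h0 : ℝ → ℝ := fun x =>
  if x < 0 then 0
  else if x < 1/16 then Real.sqrt (24 * x)
  else if x < 1/8 then Real.sqrt (-8 * x + 2)
  else 1

noncomputable def h1 : ℝ → ℝ := fun x => if x < 0 then -x / 2 else g 0 1 x

noncomputable def h2 : ℝ → ℝ := fun x => g (1/8) (1/4) x + Real.sqrt 5 * g (1/4) (3/8) x
noncomputable def h3 : ℝ → ℝ := fun x => g (5/8) (3/4) x + Real.sqrt 5 * g (3/4) (7/8) x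
noncomputable def h4 : ℝ → ℝ := fun x => g (9/64) (5/32) x + Real.sqrt 23 * g (5/32) (11/64) x
noncomputable def h5 : ℝ → ℝ := fun x => g (13/64) (7/32) x + Real.sqrt 23 * g (7/32) (15/64) x
noncomputable def h6 : ℝ → ℝ := fun x => g (41/64) (21/32) x + Real.sqrt 23 * g (21/32) (43/64) x
noncomputable def h7 : ℝ → ℝ := fun x => g (45/64) (23/32) x + Real.sqrt 23 * g (23/32) (47/64) x

noncomputable def h : Fin 8 → ℝ → ℝ := ![h0, h1, h2, h3, h4, h5, h6, h7]

open Function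

def HasIntervalIntegral (f : ℝ → ℝ) (a b v : ℝ) : Prop :=
  IntervalIntegrable f volume a b ∧ ∫ x in a..b, f x = v

namespace HasIntervalIntegral

variable {f f' : ℝ → ℝ} {a b c u v : ℝ}

theorem trans (hab : HasIntervalIntegral f a b u) (hbc : HasIntervalIntegral f b c v) :
    HasIntervalIntegral f a c (u + v) :=
  ⟨hab.1.trans hbc.1, by
    rw [← intervalIntegral.integral_add_adjacent_intervals hab.1 hbc.1, hab.2, hbc.2]⟩

theorem add (hf : HasIntervalIntegral f a b u) (hf' : HasIntervalIntegral f' a b v) :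
    HasIntervalIntegral (fun x => f x + f' x) a b (u + v) :=
  ⟨hf.1.add hf'.1, by rw [intervalIntegral.integral_add hf.1 hf'.1, hf.2, hf'.2]⟩

theorem const_mul (hf : HasIntervalIntegral f a b v) (r : ℝ) :
    HasIntervalIntegral (fun x => r * f x) a b (r * v) :=
  ⟨hf.1.const_mul r, by rw [intervalIntegral.integral_const_mul, hf.2]⟩

theorem congr_Ioo (hf' : HasIntervalIntegral f' a b v) (hab : a ≤ b)
    (heq : ∀ x ∈ Ioo a b, f x = f' x) : HasIntervalIntegral f a b v := by
  have hae : f' =ᵐ[volume.restrict (uIoc a b)] f := by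
    rw [uIoc_of_le hab, ← Measure.restrict_congr_set Ioo_ae_eq_Ioc]
    filter_upwards [ae_restrict_mem measurableSet_Ioo] with x hx
    exact (heq x hx).symm
  exact ⟨hf'.1.congr_ae hae, by rw [intervalIntegral.integral_congr_ae_restrict hae.symm, hf'.2]⟩

theorem congr (hf' : HasIntervalIntegral f' a b v) (heq : ∀ x, f x = f' x) :
    HasIntervalIntegral f a b v := by
  rwa [show f = f' from funext heq]

end HasIntervalIntegral

theorem hasIntervalIntegral_quadratic (A B C a b : ℝ) :
    HasIntervalIntegral (fun x => A * x ^ 2 + B * x + C) a b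
      (A * (b ^ 3 - a ^ 3) / 3 + B * (b ^ 2 - a ^ 2) / 2 + C * (b - a)) := by
  have hc : ∀ F : ℝ → ℝ, Continuous F → IntervalIntegrable F volume a b :=
    fun F hF => hF.intervalIntegrable a b
  refine ⟨hc _ (by fun_prop), ?_⟩
  rw [intervalIntegral.integral_add (hc _ (by fun_prop)) intervalIntegrable_const,
    intervalIntegral.integral_add (hc _ (by fun_prop)) (hc _ (by fun_prop)),
    intervalIntegral.integral_const_mul,
    intervalIntegral.integral_const_mul, integral_pow, integral_id, intervalIntegral.integral_const,
    smul_eq_mul]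
  ring

theorem hasIntervalIntegral_of_eqOn_quadratic {f : ℝ → ℝ} {A B C a b : ℝ} (hab : a ≤ b)
    (heq : ∀ x ∈ Ioo a b, f x = A * x ^ 2 + B * x + C) :
    HasIntervalIntegral f a b
      (A * (b ^ 3 - a ^ 3) / 3 + B * (b ^ 2 - a ^ 2) / 2 + C * (b - a)) :=
  (hasIntervalIntegral_quadratic A B C a b).congr_Ioo hab heq

theorem hasIntervalIntegral_of_eqOn_zero {f : ℝ → ℝ} {a b : ℝ} (hab : a ≤ b)
    (heq : ∀ x ∈ Ioo a b, f x = 0) : HasIntervalIntegral f a b 0 := by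
  simpa using
    hasIntervalIntegral_of_eqOn_quadratic (A := 0) (B := 0) (C := 0) hab (by simpa using heq)

theorem HasIntervalIntegral.of_eq_zero_outside {f : ℝ → ℝ} {a b p q v : ℝ}
    (hab : HasIntervalIntegral f a b v) (hpa : p ≤ a) (hbq : b ≤ q)
    (hf : ∀ x, x ≤ a ∨ b ≤ x → f x = 0) : HasIntervalIntegral f p q v := by
  have hp := hasIntervalIntegral_of_eqOn_zero hpa fun x hx => hf x (Or.inl hx.2.le)
  have hq := hasIntervalIntegral_of_eqOn_zero hbq fun x hx => hf x (Or.inr hx.1.le)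
  simpa using (hp.trans hab).trans hq

section g

variable {a b x : ℝ}

theorem g_of_mem_Ico_rise (hx : x ∈ Ico a (a + (b - a) / 8)) :
    g a b x = (x - a) / ((b - a) / 8) := by
  simp only [g]; split_ifs <;> grind

theorem g_of_mem_Ico_top (hx : x ∈ Ico (a + (b - a) / 8) (a + 3 * ((b - a) / 8))) :
    g a b x = 1 := by
  simp only [g]; split_ifs <;> grind

theorem g_of_mem_Ico_fall (hx : x ∈ Ico (a + 3 * ((b - a) / 8)) (a + 5 * ((b - a) / 8))) :
    g a b x = (-x + a + 4 * ((b - a) / 8)) / ((b - a) / 8) := by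
  simp only [g]; split_ifs <;> grind

theorem g_of_mem_Ico_bottom (hx : x ∈ Ico (a + 5 * ((b - a) / 8)) (a + 7 * ((b - a) / 8))) :
    g a b x = -1 := by
  simp only [g]; split_ifs <;> grind

theorem g_of_mem_Icc_return (hx : x ∈ Icc (a + 7 * ((b - a) / 8)) b) :
    g a b x = (x - b) / ((b - a) / 8) := by
  simp only [g]; split_ifs <;> grind

theorem g_eq_zero_of_le_left (hab : a < b) (hx : x ≤ a) : g a b x = 0 := by
  simp only [g]; split_ifs <;> grind

theorem g_eq_zero_of_right_le (hab : a < b) (hx : b ≤ x) : g a b x = 0 := by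
  simp only [g]; split_ifs <;> grind

theorem hasIntervalIntegral_g {p q : ℝ} (hpa : p ≤ a) (hab : a < b) (hbq : b ≤ q) :
    HasIntervalIntegral (g a b) p q 0 := by
  have hl : b - a ≠ 0 := by linarith
  have p1 := hasIntervalIntegral_of_eqOn_quadratic (f := g a b) (A := 0) (B := 1 / ((b - a) / 8))
    (C := -a / ((b - a) / 8)) (a := a) (b := a + (b - a) / 8) (by linarith)
    fun x hx => by rw [g_of_mem_Ico_rise (Ioo_subset_Ico_self hx)]; field_simp; ring
  have p2 := hasIntervalIntegral_of_eqOn_quadratic (f := g a b) (A := 0) (B := 0) (C := 1)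
    (a := a + (b - a) / 8) (b := a + 3 * ((b - a) / 8)) (by linarith)
    fun x hx => by rw [g_of_mem_Ico_top (Ioo_subset_Ico_self hx)]; ring
  have p3 := hasIntervalIntegral_of_eqOn_quadratic (f := g a b) (A := 0) (B := -1 / ((b - a) / 8))
    (C := (a + 4 * ((b - a) / 8)) / ((b - a) / 8)) (a := a + 3 * ((b - a) / 8))
    (b := a + 5 * ((b - a) / 8)) (by linarith)
    fun x hx => by rw [g_of_mem_Ico_fall (Ioo_subset_Ico_self hx)]; field_simp; ring
  have p4 := hasIntervalIntegral_of_eqOn_quadratic (f := g a b) (A := 0) (B := 0) (C := -1)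
    (a := a + 5 * ((b - a) / 8)) (b := a + 7 * ((b - a) / 8)) (by linarith)
    fun x hx => by rw [g_of_mem_Ico_bottom (Ioo_subset_Ico_self hx)]; ring
  have p5 := hasIntervalIntegral_of_eqOn_quadratic (f := g a b) (A := 0) (B := 1 / ((b - a) / 8))
    (C := -b / ((b - a) / 8)) (a := a + 7 * ((b - a) / 8)) (b := b) (by linarith)
    fun x hx => by rw [g_of_mem_Icc_return (Ioo_subset_Icc_self hx)]; field_simp; ring
  refine HasIntervalIntegral.of_eq_zero_outside ?_ hpa hbq fun x hx =>
    hx.elim (g_eq_zero_of_le_left hab) (g_eq_zero_of_right_le hab)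
  convert p1.trans p2 |>.trans p3 |>.trans p4 |>.trans p5 using 1
  field_simp
  ring

theorem hasIntervalIntegral_g_sq {p q : ℝ} (hpa : p ≤ a) (hab : a < b) (hbq : b ≤ q) :
    HasIntervalIntegral (fun x => g a b x ^ 2) p q (2 * (b - a) / 3) := by
  have hl : b - a ≠ 0 := by linarith
  have p1 := hasIntervalIntegral_of_eqOn_quadratic (f := fun x => g a b x ^ 2)
    (A := 1 / ((b - a) / 8) ^ 2) (B := -2 * a / ((b - a) / 8) ^ 2) (C := a ^ 2 / ((b - a) / 8) ^ 2)
    (a := a) (b := a + (b - a) / 8) (by linarith)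
    fun x hx => by rw [g_of_mem_Ico_rise (Ioo_subset_Ico_self hx)]; field_simp; ring
  have p2 := hasIntervalIntegral_of_eqOn_quadratic (f := fun x => g a b x ^ 2) (A := 0) (B := 0)
    (C := 1) (a := a + (b - a) / 8) (b := a + 3 * ((b - a) / 8)) (by linarith)
    fun x hx => by rw [g_of_mem_Ico_top (Ioo_subset_Ico_self hx)]; ring
  have p3 := hasIntervalIntegral_of_eqOn_quadratic (f := fun x => g a b x ^ 2)
    (A := 1 / ((b - a) / 8) ^ 2) (B := -2 * (a + 4 * ((b - a) / 8)) / ((b - a) / 8) ^ 2)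
    (C := (a + 4 * ((b - a) / 8)) ^ 2 / ((b - a) / 8) ^ 2) (a := a + 3 * ((b - a) / 8))
    (b := a + 5 * ((b - a) / 8)) (by linarith)
    fun x hx => by rw [g_of_mem_Ico_fall (Ioo_subset_Ico_self hx)]; field_simp; ring
  have p4 := hasIntervalIntegral_of_eqOn_quadratic (f := fun x => g a b x ^ 2) (A := 0) (B := 0)
    (C := 1) (a := a + 5 * ((b - a) / 8)) (b := a + 7 * ((b - a) / 8)) (by linarith)
    fun x hx => by rw [g_of_mem_Ico_bottom (Ioo_subset_Ico_self hx)]; ring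
  have p5 := hasIntervalIntegral_of_eqOn_quadratic (f := fun x => g a b x ^ 2)
    (A := 1 / ((b - a) / 8) ^ 2) (B := -2 * b / ((b - a) / 8) ^ 2) (C := b ^ 2 / ((b - a) / 8) ^ 2)
    (a := a + 7 * ((b - a) / 8)) (b := b) (by linarith)
    fun x hx => by rw [g_of_mem_Icc_return (Ioo_subset_Icc_self hx)]; field_simp; ring
  refine HasIntervalIntegral.of_eq_zero_outside ?_ hpa hbq fun x hx => by
    rw [hx.elim (g_eq_zero_of_le_left hab) (g_eq_zero_of_right_le hab), zero_pow two_ne_zero]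
  convert p1.trans p2 |>.trans p3 |>.trans p4 |>.trans p5 using 1
  field_simp
  ring

theorem g_mul_g_eq_zero {m : ℝ} (ham : a < m) (hmb : m < b) (x : ℝ) : g a m x * g m b x = 0 := by
  rcases le_total x m with hx | hx
  · rw [g_eq_zero_of_le_left hmb hx, mul_zero]
  · rw [g_eq_zero_of_right_le ham hx, zero_mul]

end g

noncomputable def gPair (a m b c x : ℝ) : ℝ := g a m x + Real.sqrt c * g m b x

section gPair

variable {a m b c p q : ℝ}

theorem gPair_eq_zero_of_notMem_Ioo (ham : a < m) (hmb : m < b) {x : ℝ} (hx : x ∉ Ioo a b) :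
    gPair a m b c x = 0 := by
  rw [mem_Ioo, not_and_or, not_lt, not_lt] at hx
  rcases hx with hx | hx
  · rw [gPair, g_eq_zero_of_le_left ham hx, g_eq_zero_of_le_left hmb (by linarith)]; ring
  · rw [gPair, g_eq_zero_of_right_le ham (by linarith), g_eq_zero_of_right_le hmb hx]; ring

theorem gPair_sq (ham : a < m) (hmb : m < b) (hc : 0 ≤ c) (x : ℝ) :
    gPair a m b c x ^ 2 = g a m x ^ 2 + c * g m b x ^ 2 := by
  rw [gPair]
  linear_combination 2 * Real.sqrt c * g_mul_g_eq_zero ham hmb x + g m b x ^ 2 * Real.sq_sqrt hc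

theorem hasIntervalIntegral_gPair (hpa : p ≤ a) (ham : a < m) (hmb : m < b) (hbq : b ≤ q) :
    HasIntervalIntegral (gPair a m b c) p q 0 := by
  have hsum := (hasIntervalIntegral_g hpa ham (by linarith)).add
    ((hasIntervalIntegral_g (by linarith) hmb hbq).const_mul (Real.sqrt c))
  rw [mul_zero, add_zero] at hsum
  exact hsum

theorem hasIntervalIntegral_gPair_sq (hpa : p ≤ a) (ham : a < m) (hmb : m < b) (hbq : b ≤ q)
    (hc : 0 ≤ c) :
    HasIntervalIntegral (fun x => gPair a m b c x ^ 2) p q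
      (2 * (m - a) / 3 + c * (2 * (b - m) / 3)) :=
  ((hasIntervalIntegral_g_sq hpa ham (by linarith)).add
    ((hasIntervalIntegral_g_sq (by linarith) hmb hbq).const_mul c)).congr (gPair_sq ham hmb hc)

end gPair

theorem h0_of_le {x : ℝ} (hx : 1 / 8 ≤ x) : h0 x = 1 := by
  simp only [h0]; split_ifs <;> grind

theorem hasIntervalIntegral_h0_sq : HasIntervalIntegral (fun x => h0 x ^ 2) (-1) 1 1 := by
  have p1 := hasIntervalIntegral_of_eqOn_zero (f := fun x => h0 x ^ 2) (a := -1) (b := 0)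
    (by norm_num) fun x hx => by simp [h0, hx.2]
  have p2 := hasIntervalIntegral_of_eqOn_quadratic (f := fun x => h0 x ^ 2) (A := 0) (B := 24)
    (C := 0) (a := 0) (b := 1 / 16) (by norm_num) fun x hx => by
      simp only [h0, if_neg (not_lt.2 hx.1.le), if_pos hx.2]
      rw [Real.sq_sqrt (by linarith [hx.1])]; ring
  have p3 := hasIntervalIntegral_of_eqOn_quadratic (f := fun x => h0 x ^ 2) (A := 0) (B := -8)
    (C := 2) (a := 1 / 16) (b := 1 / 8) (by norm_num) fun x hx => by
      simp only [h0, if_neg (show ¬x < 0 by linarith [hx.1]), if_neg (not_lt.2 hx.1.le),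
        if_pos hx.2]
      rw [Real.sq_sqrt (by linarith [hx.2])]; ring
  have p4 := hasIntervalIntegral_of_eqOn_quadratic (f := fun x => h0 x ^ 2) (A := 0) (B := 0)
    (C := 1) (a := 1 / 8) (b := 1) (by norm_num) fun x hx => by simp [h0_of_le hx.1.le]
  convert p1.trans p2 |>.trans p3 |>.trans p4 using 1
  norm_num

theorem h1_of_mem_Ico_top {x : ℝ} (hx : x ∈ Ico (1 / 8) (3 / 8)) : h1 x = 1 := by
  rw [h1, if_neg (by linarith [hx.1]), g_of_mem_Ico_top (by norm_num; exact hx)]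

theorem h1_of_mem_Ico_bottom {x : ℝ} (hx : x ∈ Ico (5 / 8) (7 / 8)) : h1 x = -1 := by
  rw [h1, if_neg (by linarith [hx.1]), g_of_mem_Ico_bottom (by norm_num; exact hx)]

theorem hasIntervalIntegral_h1_sq : HasIntervalIntegral (fun x => h1 x ^ 2) (-1) 1 (3 / 4) := by
  have p1 := hasIntervalIntegral_of_eqOn_quadratic (f := fun x => h1 x ^ 2) (A := 1 / 4) (B := 0)
    (C := 0) (a := -1) (b := 0) (by norm_num) fun x hx => by
      simp only [h1, if_pos hx.2]; ring
  have p2 := (hasIntervalIntegral_g_sq (p := 0) (q := 1) le_rfl zero_lt_one le_rfl).congr_Ioo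
    (f := fun x => h1 x ^ 2) zero_le_one fun x hx => by
      simp only [h1]; rw [if_neg (not_lt.2 hx.1.le)]
  convert p1.trans p2 using 1
  norm_num

section Discretization

variable {ι : Type*} [Fintype ι] {ξ w : ι → ℝ}

theorem integral_mul_eq_sum_of_sq_eq {μ : Measure ℝ} {p q : ℝ} {u v : ℝ → ℝ}
    (hu : IntervalIntegrable (fun x => u x ^ 2) μ p q)
    (hv : IntervalIntegrable (fun x => v x ^ 2) μ p q)
    (huv : IntervalIntegrable (fun x => u x * v x) μ p q)
    (Qu : ∫ x in p..q, u x ^ 2 ∂μ = ∑ i, w i * u (ξ i) ^ 2)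
    (Qv : ∫ x in p..q, v x ^ 2 ∂μ = ∑ i, w i * v (ξ i) ^ 2)
    (Quv : ∫ x in p..q, (u x + v x) ^ 2 ∂μ = ∑ i, w i * (u (ξ i) + v (ξ i)) ^ 2) :
    ∫ x in p..q, u x * v x ∂μ = ∑ i, w i * (u (ξ i) * v (ξ i)) := by
  have hint : ∫ x in p..q, (u x + v x) ^ 2 ∂μ =
      ∫ x in p..q, u x ^ 2 ∂μ + 2 * ∫ x in p..q, u x * v x ∂μ + ∫ x in p..q, v x ^ 2 ∂μ := by
    rw [← intervalIntegral.integral_const_mul, ← intervalIntegral.integral_add hu (huv.const_mul 2),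
      ← intervalIntegral.integral_add (hu.add (huv.const_mul 2)) hv]
    congr 1
    ext x
    ring
  have hsum : ∑ i, w i * (u (ξ i) + v (ξ i)) ^ 2 = ∑ i, w i * u (ξ i) ^ 2 +
      2 * ∑ i, w i * (u (ξ i) * v (ξ i)) + ∑ i, w i * v (ξ i) ^ 2 := by
    rw [Finset.mul_sum, ← Finset.sum_add_distrib, ← Finset.sum_add_distrib]
    exact Finset.sum_congr rfl fun i _ => by ring
  linarith

theorem two_le_card_filter_ne_zero (hw : ∀ i, w i ≠ 0) {v : ι → ℝ} (hz : ∑ i, w i * v i = 0)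
    (hs : ∑ i, w i * v i ^ 2 ≠ 0) : 2 ≤ (Finset.univ.filter fun i => v i ≠ 0).card := by
  obtain ⟨i₀, -, hi₀⟩ := Finset.exists_ne_zero_of_sum_ne_zero hs
  have hv₀ : v i₀ ≠ 0 := fun hv => hi₀ (by simp [hv])
  by_contra! hcard
  have honly : ∀ i, i ≠ i₀ → v i = 0 := fun i hi => by
    by_contra hvi
    exact hi (Finset.card_le_one.1 (Nat.le_of_lt_succ hcard) i (by simpa using hvi) i₀
      (by simpa using hv₀))
  rw [Finset.sum_eq_single i₀ (fun i _ hi => by rw [honly i hi, mul_zero]) (by simp)] at hz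
  exact mul_ne_zero (hw i₀) hv₀ hz

theorem two_le_card_nodes_mem_of_integral_eq_zero (hw : ∀ i, w i ≠ 0) {p q ε c : ℝ}
    {u f : ℝ → ℝ} {S : Set ℝ} [DecidablePred (· ∈ S)] (hε : ε ≠ 0) (hc : c ≠ 0)
    (hfS : ∀ x ∉ S, f x = 0) (huS : ∀ x ∈ S, u x = ε)
    (hu : IntervalIntegrable (fun x => u x ^ 2) volume p q) (hf : HasIntervalIntegral f p q 0)
    (hf2 : HasIntervalIntegral (fun x => f x ^ 2) p q c)
    (Qu : ∫ x in p..q, u x ^ 2 = ∑ i, w i * u (ξ i) ^ 2)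
    (Qf : ∫ x in p..q, f x ^ 2 = ∑ i, w i * f (ξ i) ^ 2)
    (Quf : ∫ x in p..q, (u x + f x) ^ 2 = ∑ i, w i * (u (ξ i) + f (ξ i)) ^ 2) :
    2 ≤ (Finset.univ.filter fun i => ξ i ∈ S).card := by
  have huf : ∀ x, u x * f x = ε * f x := fun x => by
    by_cases hx : x ∈ S
    · rw [huS x hx]
    · rw [hfS x hx, mul_zero, mul_zero]
  have hpol := integral_mul_eq_sum_of_sq_eq hu hf2.1
    (by simpa only [huf] using hf.1.const_mul ε) Qu Qf Quf
  simp only [huf, intervalIntegral.integral_const_mul, hf.2, mul_zero, mul_left_comm _ ε,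
    ← Finset.mul_sum] at hpol
  have hmean : ∑ i, w i * f (ξ i) = 0 := (mul_eq_zero.1 hpol.symm).resolve_left hε
  calc 2 ≤ (Finset.univ.filter fun i => f (ξ i) ≠ 0).card :=
        two_le_card_filter_ne_zero hw hmean (Qf ▸ hf2.2 ▸ hc)
    _ ≤ _ := Finset.card_le_card fun i => by
        simp only [Finset.mem_filter, Finset.mem_univ, true_and]
        exact fun hi => by_contra fun hS => hi (hfS _ hS)

end Discretization

theorem exists_mem_of_two_le_card_filter {ι κ α : Type*} [Fintype ι] [Fintype κ] {ξ : ι → α}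
    {I : κ → Set α} [∀ k, DecidablePred (· ∈ I k)] (hI : Pairwise (Disjoint on I))
    (hcard : Fintype.card ι ≤ 2 * Fintype.card κ)
    (h2 : ∀ k, 2 ≤ (Finset.univ.filter fun i => ξ i ∈ I k).card) (i : ι) : ∃ k, ξ i ∈ I k := by
  classical
  set S : κ → Finset ι := fun k => Finset.univ.filter fun i => ξ i ∈ I k
  have hS : ((Finset.univ : Finset κ) : Set κ).PairwiseDisjoint S := fun k _ l _ hkl =>
    Finset.disjoint_filter.2 fun _ _ hk hl => Set.disjoint_left.1 (hI hkl) hk hl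
  have hU : Finset.univ.biUnion S = Finset.univ := by
    refine Finset.eq_univ_of_card _ (le_antisymm (Finset.card_le_univ _) ?_)
    rw [Finset.card_biUnion hS]
    calc Fintype.card ι ≤ 2 * Fintype.card κ := hcard
      _ = ∑ _k : κ, 2 := by simp [mul_comm]
      _ ≤ _ := Finset.sum_le_sum fun k _ => h2 k
  have hi : i ∈ Finset.univ.biUnion S := hU ▸ Finset.mem_univ i
  simpa [S] using hi

noncomputable def bumpLo : Fin 4 → ℝ := ![9/64, 13/64, 41/64, 45/64]
noncomputable def bumpMid : Fin 4 → ℝ := ![5/32, 7/32, 21/32, 23/32]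
noncomputable def bumpHi : Fin 4 → ℝ := ![11/64, 15/64, 43/64, 47/64]

theorem h_natAdd_four (j : Fin 4) :
    h (Fin.natAdd 4 j) = gPair (bumpLo j) (bumpMid j) (bumpHi j) 23 := by
  fin_cases j <;> rfl

theorem bump_bounds (j : Fin 4) :
    1 / 8 ≤ bumpLo j ∧ bumpLo j < bumpMid j ∧ bumpMid j < bumpHi j ∧ bumpHi j ≤ 1 := by
  fin_cases j <;> norm_num [bumpLo, bumpMid, bumpHi]

theorem pairwise_disjoint_bumps : Pairwise (Disjoint on fun j => Ioo (bumpLo j) (bumpHi j)) := by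
  intro j k hjk
  fin_cases j <;> fin_cases k <;>
    first | exact (hjk rfl).elim | norm_num [onFun, bumpLo, bumpHi, Ioo_disjoint_Ioo]

theorem h1_eq_on_bump (j : Fin 4) :
    ∃ ε : ℝ, ε ^ 2 = 1 ∧ ∀ x ∈ Ioo (bumpLo j) (bumpHi j), h1 x = ε := by
  have top {lo hi : ℝ} (hlo : 1 / 8 ≤ lo) (hhi : hi ≤ 3 / 8) : ∀ x ∈ Ioo lo hi, h1 x = 1 :=
    fun x hx => h1_of_mem_Ico_top ⟨by linarith [hx.1], by linarith [hx.2]⟩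
  have bottom {lo hi : ℝ} (hlo : 5 / 8 ≤ lo) (hhi : hi ≤ 7 / 8) : ∀ x ∈ Ioo lo hi, h1 x = -1 :=
    fun x hx => h1_of_mem_Ico_bottom ⟨by linarith [hx.1], by linarith [hx.2]⟩
  fin_cases j
  · exact ⟨1, one_pow 2, top (by norm_num [bumpLo]) (by norm_num [bumpHi])⟩
  · exact ⟨1, one_pow 2, top (by norm_num [bumpLo]) (by norm_num [bumpHi])⟩
  · exact ⟨-1, by norm_num, bottom (by norm_num [bumpLo]) (by norm_num [bumpHi])⟩
  · exact ⟨-1, by norm_num, bottom (by norm_num [bumpLo]) (by norm_num [bumpHi])⟩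

theorem two_le_card_nodes_mem_bump {ξ w : Fin 8 → ℝ} (hw : ∀ i, w i ≠ 0)
    (hQ : ∀ f ∈ Submodule.span ℝ (range h),
      ∫ x in (-1:ℝ)..1, f x ^ 2 = ∑ i, w i * f (ξ i) ^ 2)
    (j : Fin 4) : 2 ≤ (Finset.univ.filter fun i => ξ i ∈ Ioo (bumpLo j) (bumpHi j)).card := by
  obtain ⟨hlo, hlm, hmh, hhi⟩ := bump_bounds j
  obtain ⟨ε, hε, hh1⟩ := h1_eq_on_bump j
  have hmem : ∀ k, h k ∈ Submodule.span ℝ (range h) := fun k => Submodule.subset_span ⟨k, rfl⟩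
  have hf := hmem (Fin.natAdd 4 j)
  rw [h_natAdd_four] at hf
  exact two_le_card_nodes_mem_of_integral_eq_zero hw (by rintro rfl; norm_num at hε)
    (ne_of_gt (by linarith)) (fun x hx => gPair_eq_zero_of_notMem_Ioo hlm hmh hx) hh1
    hasIntervalIntegral_h1_sq.1 (hasIntervalIntegral_gPair (by linarith) hlm hmh hhi)
    (hasIntervalIntegral_gPair_sq (by linarith) hlm hmh hhi (by norm_num))
    (hQ _ (hmem 1)) (hQ _ hf) (hQ _ (Submodule.add_mem _ (hmem 1) hf))

theorem no_eight_point_discretization :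
    ¬ ∃ (ξ : Fin 8 → ℝ) (l : Fin 8 → ℝ),
      (∀ j, ξ j ∈ Icc (-1:ℝ) 1) ∧ (∀ j, l j ≠ 0) ∧
      ∀ f ∈ Submodule.span ℝ (Set.range h),
        (∫ x in (-1:ℝ)..1, (f x) ^ 2) = ∑ j, l j * (f (ξ j)) ^ 2 := by
  rintro ⟨ξ, w, -, hw, hQ⟩
  have hnode := exists_mem_of_two_le_card_filter pairwise_disjoint_bumps (by simp)
    (two_le_card_nodes_mem_bump hw hQ)
  have hval : ∀ i, h0 (ξ i) ^ 2 = 1 ∧ h1 (ξ i) ^ 2 = 1 := fun i => by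
    obtain ⟨j, hj⟩ := hnode i
    obtain ⟨ε, hε, hh1⟩ := h1_eq_on_bump j
    exact ⟨by rw [h0_of_le (by linarith [(bump_bounds j).1, hj.1])]; norm_num, by rw [hh1 _ hj, hε]⟩
  have hmem : ∀ k, h k ∈ Submodule.span ℝ (range h) := fun k => Submodule.subset_span ⟨k, rfl⟩
  have e0 : (1 : ℝ) = ∑ i, w i := by
    rw [← hasIntervalIntegral_h0_sq.2, hQ h0 (hmem 0)]
    exact Finset.sum_congr rfl fun i _ => by rw [(hval i).1, mul_one]
  have e1 : (3 / 4 : ℝ) = ∑ i, w i := by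
    rw [← hasIntervalIntegral_h1_sq.2, hQ h1 (hmem 1)]
    exact Finset.sum_congr rfl fun i _ => by rw [(hval i).2, mul_one]
  linarith
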